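/- (Continuity for nondecreasing sequences of gambles) Let f be an extended real variable on Ω and (f_n) a nondecreasing sequence of gambles (bounded real variables) on Ω converging pointwise to f. If E_V(f) < +∞, then E_V(f) = lim_n E_V(f_n). -/

import Mathlib

open Filter

/-- prefix of length `n` of a path -/
def pref {X : Type*} (ω : ℕ → X) (n : ℕ) : List X := (List.range n).map ω

/-- process difference -/
def pdiff {X : Type*} (M : List X → ℝ) (s : List X) : X → ℝ := fun x => M (s ++ [x]) - M s

/-- process multiplier -/
noncomputable def pmul {X : Type*} (M : List X → ℝ) (s : List X) : X → ℝ :=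
  fun x => M (s ++ [x]) / M s

/-- family of coherent upper expectations (local models of an imprecise probability tree) -/
def Coherent {X : Type*} (Q : List X → (X → ℝ) → ℝ) : Prop :=
  ∀ s : List X,
    (∀ h : X → ℝ, Q s h ≤ ⨆ x, h x) ∧
    (∀ h g : X → ℝ, Q s (h + g) ≤ Q s h + Q s g) ∧
    (∀ (h : X → ℝ) (c : ℝ), 0 ≤ c → Q s (c • h) = c * Q s h)

/-- supermartingale for the tree with local models `Q` -/
def IsSupermart {X : Type*} (Q : List X → (X → ℝ) → ℝ) (M : List X → ℝ) : Prop :=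
  ∀ s : List X, Q s (pdiff M s) ≤ 0

/-- bounded below process -/
def BddBelowProc {X : Type*} (M : List X → ℝ) : Prop := ∃ C : ℝ, ∀ s : List X, C ≤ M s

/-- test supermartingale: nonnegative supermartingale with initial value 1 -/
def IsTestSupermart {X : Type*} (Q : List X → (X → ℝ) → ℝ) (M : List X → ℝ) : Prop :=
  IsSupermart Q M ∧ (∀ s : List X, 0 ≤ M s) ∧ M [] = 1

/-- game-theoretic upper expectation conditional on a situation `s` -/
noncomputable def EV {X : Type*} (Q : List X → (X → ℝ) → ℝ) (f : (ℕ → X) → EReal)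
    (s : List X) : EReal :=
  sInf { y : EReal | ∃ M : List X → ℝ, IsSupermart Q M ∧ BddBelowProc M ∧
    (∀ ω : ℕ → X, pref ω s.length = s →
      f ω ≤ Filter.liminf (fun n => ((M (pref ω n) : ℝ) : EReal)) Filter.atTop) ∧
    y = ((M s : ℝ) : EReal) }

/-!
`EV Q (F n) [] ≤ EV Q f []` by monotonicity. For the converse, take a superhedge `M` of `f`
(one exists as `EV Q f [] < ⊤`) and a test supermartingale `T` that tends to infinity on every
path where the lower half of Lévy's zero-one law, `F m ω ≤ liminf_k EV Q (F m) ωᵏ`, fails for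
some `m`. `T` is a countable mixture of doubling strategies: for rationals `a < b`, stake the
capital on a superhedge of `F m` whenever `EV Q (F m)` drops below `a`, and cash in once that
superhedge exceeds `b`. Then `⨆ n, min (EV Q (F n) ·) M + ε T` is a supermartingale starting
below `⨆ n, EV Q (F n) [] + ε` whose liminf dominates `f` on every path: through
`F m ≤ liminf EV Q (F m)` and `F m ≤ f ≤ liminf M` where Lévy's law holds, and because `T → ∞`
elsewhere.
-/

open Filter Topology

section Supermartingales

variable {X : Type*} {Q : List X → (X → ℝ) → ℝ}

namespace Coherent

variable (hQ : Coherent Q) (s : List X)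
include hQ

theorem le_iSup (h : X → ℝ) : Q s h ≤ ⨆ x, h x := (hQ s).1 h

theorem add_le (h g : X → ℝ) : Q s (h + g) ≤ Q s h + Q s g := (hQ s).2.1 h g

theorem smul {c : ℝ} (hc : 0 ≤ c) (h : X → ℝ) : Q s (c • h) = c * Q s h := (hQ s).2.2 h c hc

theorem zero : Q s 0 = 0 := by simpa using hQ.smul s le_rfl 0

theorem le_add_of_le [Nonempty X] {h g : X → ℝ} {c : ℝ} (hle : ∀ x, h x ≤ g x + c) :
    Q s h ≤ Q s g + c := by
  have hsup : ⨆ x, (h - g) x ≤ c := ciSup_le fun x => by simp only [Pi.sub_apply]; linarith [hle x]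
  have hsplit : h = g + (h - g) := by simp
  rw [hsplit]
  linarith [hQ.add_le s g (h - g), hQ.le_iSup s (h - g)]

theorem mono [Nonempty X] {h g : X → ℝ} (hle : ∀ x, h x ≤ g x) : Q s h ≤ Q s g := by
  simpa using hQ.le_add_of_le s (c := 0) fun x => by simpa using hle x

theorem le_of_forall_le [Nonempty X] {h : X → ℝ} {c : ℝ} (hc : ∀ x, c ≤ h x) : c ≤ Q s h := by
  have := hQ.le_add_of_le s (h := 0) (g := h) (c := -c) fun x => by simp; linarith [hc x]
  linarith [hQ.zero s]

theorem add_const [Nonempty X] (h : X → ℝ) (c : ℝ) : Q s (fun x => h x + c) = Q s h + c :=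
  le_antisymm (hQ.le_add_of_le s fun _ => le_rfl)
    (by linarith [hQ.le_add_of_le s (h := h) (g := fun x => h x + c) (c := -c) fun x => by simp])

theorem const [Nonempty X] (c : ℝ) : Q s (fun _ => c) = c := by
  simpa [hQ.zero] using hQ.add_const s 0 c

theorem sum_le {ι : Type*} (t : Finset ι) (h : ι → X → ℝ) :
    Q s (∑ j ∈ t, h j) ≤ ∑ j ∈ t, Q s (h j) := by
  induction t using Finset.cons_induction with
  | empty => simp [hQ.zero]
  | cons j t _ ih =>
    rw [Finset.sum_cons, Finset.sum_cons]
    linarith [hQ.add_le s (h j) (∑ i ∈ t, h i)]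

theorem isSupermart_iff [Nonempty X] {M : List X → ℝ} :
    IsSupermart Q M ↔ ∀ s, Q s (fun x => M (s ++ [x])) ≤ M s := by
  refine forall_congr' fun s => ?_
  have : (fun x => M (s ++ [x])) = fun x => pdiff M s x + M s := by simp [pdiff]
  rw [this, hQ.add_const]
  constructor <;> intro h <;> linarith

end Coherent

namespace IsSupermart

variable (hQ : Coherent Q)
include hQ

theorem step_le [Nonempty X] {M : List X → ℝ} (hM : IsSupermart Q M) (s : List X) :
    Q s (fun x => M (s ++ [x])) ≤ M s :=
  hQ.isSupermart_iff.mp hM s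

theorem const (c : ℝ) : IsSupermart Q (fun _ => c) := fun s => by
  have : pdiff (fun _ => c) s = 0 := by funext x; simp [pdiff]
  rw [this, hQ.zero]

theorem const_mul_add {M N : List X → ℝ} (hM : IsSupermart Q M) (hN : IsSupermart Q N) {c : ℝ}
    (hc : 0 ≤ c) : IsSupermart Q (fun s => c * M s + N s) := fun s => by
  have : pdiff (fun s => c * M s + N s) s = c • pdiff M s + pdiff N s := by
    funext x; simp only [pdiff, Pi.add_apply, Pi.smul_apply, smul_eq_mul]; ring
  rw [this]
  nlinarith [hQ.add_le s (c • pdiff M s) (pdiff N s), hQ.smul s hc (pdiff M s), hM s, hN s]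

theorem min [Nonempty X] {M N : List X → ℝ} (hM : IsSupermart Q M) (hN : IsSupermart Q N) :
    IsSupermart Q (fun s => min (M s) (N s)) :=
  hQ.isSupermart_iff.mpr fun s => le_min
    ((hQ.mono s fun _ => min_le_left _ _).trans (hM.step_le hQ s))
    ((hQ.mono s fun _ => min_le_right _ _).trans (hN.step_le hQ s))

end IsSupermart

theorem Coherent.isSupermart_iSup [Finite X] [Nonempty X] (hQ : Coherent Q) {M : ℕ → List X → ℝ}
    (hM : ∀ n, IsSupermart Q (M n)) (hmono : ∀ s, Monotone fun n => M n s)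
    (hbdd : ∀ s, BddAbove (Set.range fun n => M n s)) :
    IsSupermart Q (fun s => ⨆ n, M n s) := by
  refine hQ.isSupermart_iff.mpr fun s => le_of_forall_pos_le_add fun ε hε => ?_
  -- on the finitely many children one index `N` is `ε`-close to the supremum
  have hnear : ∀ x, ∃ n, ⨆ k, M k (s ++ [x]) < M n (s ++ [x]) + ε := fun x => by
    obtain ⟨n, hn⟩ := exists_lt_of_lt_ciSup (sub_lt_self (⨆ k, M k (s ++ [x])) hε)
    exact ⟨n, by linarith⟩
  choose n hn using hnear
  obtain ⟨N, hN⟩ := (Set.finite_range n).bddAbove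
  have hchild : ∀ x, ⨆ n, M n (s ++ [x]) ≤ M N (s ++ [x]) + ε := fun x =>
    (hn x).le.trans (by linarith [hmono (s ++ [x]) (hN ⟨x, rfl⟩)])
  calc Q s (fun x => ⨆ n, M n (s ++ [x])) ≤ Q s (fun x => M N (s ++ [x])) + ε :=
        hQ.le_add_of_le s hchild
    _ ≤ M N s + ε := by linarith [(hM N).step_le hQ s]
    _ ≤ (⨆ n, M n s) + ε := by linarith [le_ciSup (hbdd s) N]

end Supermartingales

section Paths

variable {X : Type*}

@[simp] theorem length_pref (ω : ℕ → X) (n : ℕ) : (pref ω n).length = n := by simp [pref]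

theorem pref_succ (ω : ℕ → X) (n : ℕ) : pref ω (n + 1) = pref ω n ++ [ω n] := by
  simp [pref, List.range_succ]

theorem take_pref (ω : ℕ → X) {m n : ℕ} (h : m ≤ n) : (pref ω n).take m = pref ω m := by
  simp [pref, ← List.map_take, List.take_range, Nat.min_eq_left h]

theorem pref_prefix_pref (ω : ℕ → X) {m n : ℕ} (h : m ≤ n) : pref ω m <+: pref ω n :=
  take_pref ω h ▸ List.take_prefix _ _

theorem List.IsPrefix.pref_eq {ω : ℕ → X} {s t : List X} (hst : s <+: t)
    (ht : pref ω t.length = t) : pref ω s.length = s := by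
  rw [← take_pref ω hst.length_le, ht]
  exact (List.prefix_iff_eq_take.mp hst).symm

theorem prefix_pref_of_pref_eq {ω : ℕ → X} {u : List X} (hu : pref ω u.length = u) {k : ℕ}
    (hk : u.length ≤ k) : u <+: pref ω k :=
  hu ▸ pref_prefix_pref ω hk

theorem exists_path_eq_next_pref (next : List X → X) : ∃ ω : ℕ → X, ∀ n, ω n = next (pref ω n) := by
  let nodes : ℕ → List X := fun n => Nat.rec [] (fun _ s => s ++ [next s]) n
  refine ⟨fun n => next (nodes n), fun n => ?_⟩
  suffices h : ∀ n, pref (fun n => next (nodes n)) n = nodes n by rw [h]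
  intro n
  induction n with
  | zero => rfl
  | succ n ih => rw [pref_succ, ih]

end Paths

section Superhedging

variable {X : Type*} {Q : List X → (X → ℝ) → ℝ}

/-- The processes over whose values at `s` the infimum `EV Q f s` is taken. -/
def Superhedges (Q : List X → (X → ℝ) → ℝ) (f : (ℕ → X) → EReal) (s : List X)
    (M : List X → ℝ) : Prop :=
  IsSupermart Q M ∧ BddBelowProc M ∧
    ∀ ω : ℕ → X, pref ω s.length = s → f ω ≤ liminf (fun n => (M (pref ω n) : EReal)) atTop

theorem EV_le_of_superhedges {f : (ℕ → X) → EReal} {s : List X} {M : List X → ℝ}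
    (hM : Superhedges Q f s M) : EV Q f s ≤ M s :=
  sInf_le ⟨M, hM.1, hM.2.1, hM.2.2, rfl⟩

theorem exists_superhedges_lt {f : (ℕ → X) → EReal} {s : List X} {y : EReal}
    (h : EV Q f s < y) : ∃ M, Superhedges Q f s M ∧ (M s : EReal) < y := by
  obtain ⟨_, ⟨M, hsup, hbdd, hdom, rfl⟩, hlt⟩ := sInf_lt_iff.mp h
  exact ⟨M, ⟨hsup, hbdd, hdom⟩, hlt⟩

theorem Superhedges.of_prefix {f : (ℕ → X) → EReal} {s t : List X} {M : List X → ℝ}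
    (hM : Superhedges Q f s M) (hst : s <+: t) : Superhedges Q f t M :=
  ⟨hM.1, hM.2.1, fun ω hω => hM.2.2 ω (hst.pref_eq hω)⟩

theorem EV_mono {f g : (ℕ → X) → EReal} (hfg : f ≤ g) (s : List X) : EV Q f s ≤ EV Q g s :=
  sInf_le_sInf fun _ ⟨_, hsup, hbdd, hdom, hy⟩ =>
    ⟨_, hsup, hbdd, fun ω hω => (hfg ω).trans (hdom ω hω), hy⟩

theorem EV_le_of_forall_le (hQ : Coherent Q) {f : (ℕ → X) → EReal}
    {s : List X} {c : ℝ} (hc : ∀ ω, pref ω s.length = s → f ω ≤ c) : EV Q f s ≤ c :=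
  EV_le_of_superhedges (M := fun _ => c)
    ⟨IsSupermart.const hQ c, ⟨c, fun _ => le_rfl⟩, fun ω hω => by simpa using hc ω hω⟩

variable [Finite X] [Nonempty X]

/-- Following at each node a child of least value, a supermartingale never rises above its
value at `t`. -/
theorem IsSupermart.exists_path_le (hQ : Coherent Q) {M : List X → ℝ} (hM : IsSupermart Q M)
    (t : List X) :
    ∃ ω : ℕ → X, pref ω t.length = t ∧ ∀ k, t.length ≤ k → M (pref ω k) ≤ M t := by
  have hchild : ∀ s, ∃ x, M (s ++ [x]) ≤ M s := fun s => by
    obtain ⟨x, hx⟩ := Finite.exists_min fun x => M (s ++ [x])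
    exact ⟨x, (hQ.le_of_forall_le s hx).trans (hM.step_le hQ s)⟩
  choose pick hpick using hchild
  obtain ⟨ω, hω⟩ := exists_path_eq_next_pref fun s =>
    if h : s.length < t.length then t[s.length] else pick s
  have htake : ∀ n ≤ t.length, pref ω n = t.take n := by
    intro n hn
    induction n with
    | zero => simp [pref]
    | succ n ih =>
      rw [pref_succ, ih (by omega), List.take_succ_eq_append_getElem (by omega), hω,
        ih (by omega), dif_pos (by simp; omega)]
      simp [Nat.min_eq_left (show n ≤ t.length by omega)]
  refine ⟨ω, by simpa using htake t.length le_rfl, fun k hk => ?_⟩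
  induction k, hk using Nat.le_induction with
  | base => rw [htake t.length le_rfl, List.take_length]
  | succ k hk ih =>
    rw [pref_succ, hω k, dif_neg (by simp; omega)]
    exact (hpick _).trans ih

theorem Superhedges.le_of_forall_le (hQ : Coherent Q) {f : (ℕ → X) → EReal} {s : List X}
    {M : List X → ℝ} (hM : Superhedges Q f s M) {c : ℝ}
    (hc : ∀ ω, pref ω s.length = s → c ≤ f ω) {t : List X} (hst : s <+: t) : c ≤ M t := by
  obtain ⟨ω, hωt, hle⟩ := hM.1.exists_path_le hQ t
  have hlim : liminf (fun n => (M (pref ω n) : EReal)) atTop ≤ M t :=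
    liminf_le_of_frequently_le' <| Eventually.frequently <|
      (eventually_ge_atTop t.length).mono fun k hk => EReal.coe_le_coe (hle k hk)
  have hωs := hst.pref_eq hωt
  exact_mod_cast ((hc ω hωs).trans (hM.2.2 ω hωs)).trans hlim

theorem le_EV_of_forall_le (hQ : Coherent Q) {f : (ℕ → X) → EReal} {s : List X} {c : ℝ}
    (hc : ∀ ω, pref ω s.length = s → c ≤ f ω) : c ≤ EV Q f s :=
  le_sInf fun _ ⟨_, hsup, hbdd, hdom, hy⟩ =>
    hy ▸ EReal.coe_le_coe (Superhedges.le_of_forall_le hQ ⟨hsup, hbdd, hdom⟩ hc List.prefix_rfl)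

end Superhedging

section Gambles

variable {X : Type*} [Finite X] [Nonempty X] {Q : List X → (X → ℝ) → ℝ}

/-- `toReal` loses nothing here: the upper expectation of a gamble is finite
(`EV_coe_eq_EVReal`). -/
noncomputable def EVReal (Q : List X → (X → ℝ) → ℝ) (g : (ℕ → X) → ℝ) (s : List X) : ℝ :=
  (EV Q (fun ω => (g ω : EReal)) s).toReal

variable (hQ : Coherent Q) {g : (ℕ → X) → ℝ} {C : ℝ}
include hQ

theorem EV_coe_eq_EVReal (hg : ∀ ω, |g ω| ≤ C) (s : List X) :
    EV Q (fun ω => (g ω : EReal)) s = EVReal Q g s := by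
  have hlow : ((-C : ℝ) : EReal) ≤ EV Q (fun ω => (g ω : EReal)) s :=
    le_EV_of_forall_le hQ fun ω _ => EReal.coe_le_coe (abs_le.mp (hg ω)).1
  have hup : EV Q (fun ω => (g ω : EReal)) s ≤ C :=
    EV_le_of_forall_le hQ fun ω _ => EReal.coe_le_coe (abs_le.mp (hg ω)).2
  exact (EReal.coe_toReal (hup.trans_lt (EReal.coe_lt_top C)).ne
    ((EReal.bot_lt_coe _).trans_le hlow).ne').symm

theorem neg_le_EVReal (hg : ∀ ω, |g ω| ≤ C) (s : List X) : -C ≤ EVReal Q g s := by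
  have : ((-C : ℝ) : EReal) ≤ EV Q (fun ω => (g ω : EReal)) s :=
    le_EV_of_forall_le hQ fun ω _ => EReal.coe_le_coe (abs_le.mp (hg ω)).1
  rw [EV_coe_eq_EVReal hQ hg] at this
  exact_mod_cast this

theorem EVReal_mono {g' : (ℕ → X) → ℝ} {C' : ℝ} (hg : ∀ ω, |g ω| ≤ C)
    (hg' : ∀ ω, |g' ω| ≤ C') (hle : g ≤ g') (s : List X) : EVReal Q g s ≤ EVReal Q g' s := by
  have := EV_mono (Q := Q) (fun ω => EReal.coe_le_coe (hle ω)) s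
  rwa [EV_coe_eq_EVReal hQ hg, EV_coe_eq_EVReal hQ hg', EReal.coe_le_coe_iff] at this

/-- One half of the law of iterated upper expectations. -/
theorem isSupermart_EVReal (hg : ∀ ω, |g ω| ≤ C) : IsSupermart Q (EVReal Q g) := by
  refine hQ.isSupermart_iff.mpr fun s => le_of_forall_pos_le_add fun ε hε => ?_
  have hlt : EV Q (fun ω => (g ω : EReal)) s < (EVReal Q g s + ε : ℝ) := by
    rw [EV_coe_eq_EVReal hQ hg, EReal.coe_lt_coe_iff]
    linarith
  obtain ⟨M, hM, hMs⟩ := exists_superhedges_lt hlt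
  have hchild : ∀ x, EVReal Q g (s ++ [x]) ≤ M (s ++ [x]) := fun x => by
    have := EV_le_of_superhedges (hM.of_prefix (List.prefix_append s [x]))
    rwa [EV_coe_eq_EVReal hQ hg, EReal.coe_le_coe_iff] at this
  calc Q s (fun x => EVReal Q g (s ++ [x])) ≤ Q s (fun x => M (s ++ [x])) := hQ.mono s hchild
    _ ≤ M s := hM.1.step_le hQ s
    _ ≤ EVReal Q g s + ε := by exact_mod_cast hMs.le

end Gambles

/-- State of a betting strategy on a family of unit processes `φ r`: either cash `w`, or the
capital `w` staked at node `r` on `φ r`, so that it is worth `w * φ r t` at a later node `t`. -/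
inductive BetState (X : Type*)
  | cash (w : ℝ)
  | bet (r : List X) (w : ℝ)

namespace BetState

variable {X : Type*} (φ : List X → List X → ℝ) (buy : List X → Prop) (ρ : ℝ)

def base : BetState X → ℝ
  | cash w => w
  | bet _ w => w

def wealth (t : List X) : BetState X → ℝ
  | cash w => w
  | bet r w => w * φ r t

noncomputable def settle (t : List X) : BetState X → BetState X
  | cash w => cash w
  | bet r w => if ρ ≤ φ r t then cash (w * φ r t) else bet r w

open Classical in
noncomputable def rebuy (t : List X) : BetState X → BetState X
  | cash w => if buy t then bet t w else cash w
  | bet r w => bet r w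

noncomputable def step (t : List X) (st : BetState X) : BetState X :=
  rebuy buy t (settle φ ρ t st)

noncomputable def run (s : List X) : BetState X :=
  s.inits.foldl (fun st t => step φ buy ρ t st) (cash 1)

/-- The doubling strategy: bet everything at a `buy` node, cash in once the unit process has
grown by the factor `ρ`, then wait for the next `buy` node. -/
noncomputable def capital (s : List X) : ℝ := wealth φ s (run φ buy ρ s)

def Valid (s : List X) : BetState X → Prop
  | cash w => 1 ≤ w
  | bet r w => 1 ≤ w ∧ buy r ∧ r <+: s

variable {φ buy ρ}

theorem run_nil : run φ buy ρ [] = step φ buy ρ [] (cash 1) := rfl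

theorem run_concat (s : List X) (x : X) :
    run φ buy ρ (s ++ [x]) = step φ buy ρ (s ++ [x]) (run φ buy ρ s) := by
  simp [run, List.inits_append]

theorem exists_run_eq_step (s : List X) : ∃ st, run φ buy ρ s = step φ buy ρ s st := by
  rcases List.eq_nil_or_concat' s with rfl | ⟨s', x, rfl⟩
  · exact ⟨_, run_nil⟩
  · exact ⟨_, run_concat s' x⟩

theorem exists_step_eq_bet {t : List X} (ht : buy t) (st : BetState X) :
    ∃ r w, step φ buy ρ t st = bet r w := by
  unfold step
  cases settle φ ρ t st with
  | cash w => exact ⟨t, w, by simp [rebuy, ht]⟩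
  | bet r w => exact ⟨r, w, rfl⟩

theorem wealth_step (hself : ∀ r, buy r → φ r r = 1) (t : List X) (st : BetState X) :
    wealth φ t (step φ buy ρ t st) = wealth φ t st := by
  have hrebuy : ∀ st, wealth φ t (rebuy buy t st) = wealth φ t st := by
    rintro (w | ⟨r, w⟩)
    · by_cases ht : buy t <;> simp [rebuy, wealth, ht, hself]
    · rfl
  rw [step, hrebuy]
  rcases st with w | ⟨r, w⟩
  · rfl
  · by_cases hρ : ρ ≤ φ r t <;> simp [settle, wealth, hρ]

theorem step_bet_of_lt {t r : List X} (hlt : φ r t < ρ) (w : ℝ) :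
    step φ buy ρ t (bet r w) = bet r w := by
  simp [step, settle, rebuy, not_le.mpr hlt]

theorem base_step_bet_of_le {t r : List X} (hle : ρ ≤ φ r t) (w : ℝ) :
    base (step φ buy ρ t (bet r w)) = w * φ r t := by
  by_cases ht : buy t <;> simp [step, settle, rebuy, base, hle, ht]

theorem Valid.one_le_base {s : List X} {st : BetState X} (hst : Valid buy s st) :
    1 ≤ base st := by
  rcases st with w | ⟨r, w⟩
  exacts [hst, hst.1]

theorem Valid.half_base_le_wealth (hhalf : ∀ r t, buy r → r <+: t → 1 / 2 ≤ φ r t)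
    {s : List X} {st : BetState X} (hst : Valid buy s st) : base st / 2 ≤ wealth φ s st := by
  rcases st with w | ⟨r, w⟩
  · simp only [base, wealth]
    linarith [show (1 : ℝ) ≤ w from hst]
  · obtain ⟨hw, hr, hrs⟩ := hst
    simp only [base, wealth]
    nlinarith [hhalf r s hr hrs]

section Valid

variable (hρ : 1 ≤ ρ)
include hρ

theorem Valid.step {s t : List X} {st : BetState X} (hst : Valid buy s st) (hpre : s <+: t) :
    Valid buy t (step φ buy ρ t st) := by
  have hsettle : Valid buy t (settle φ ρ t st) := by
    rcases st with w | ⟨r, w⟩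
    · exact hst
    · obtain ⟨hw, hr, hrs⟩ := hst
      by_cases hsell : ρ ≤ φ r t
      · simp only [settle, hsell, if_true, Valid]
        nlinarith
      · simpa [settle, hsell, Valid] using ⟨hw, hr, hrs.trans hpre⟩
  unfold BetState.step
  rcases hset : settle φ ρ t st with w | ⟨r, w⟩ <;> rw [hset] at hsettle
  · by_cases ht : buy t <;> simpa [rebuy, ht, Valid] using hsettle
  · exact hsettle

theorem valid_run (s : List X) : Valid buy s (run φ buy ρ s) := by
  induction s using List.reverseRecOn with
  | nil => exact Valid.step (φ := φ) hρ (show Valid buy [] (cash 1) from le_rfl) List.prefix_rfl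
  | append_singleton s x ih =>
    rw [run_concat]
    exact ih.step hρ (List.prefix_append s [x])

theorem base_le_base_step {s t : List X} {st : BetState X} (hst : Valid buy s st) :
    base st ≤ base (step φ buy ρ t st) := by
  rcases st with w | ⟨r, w⟩
  · by_cases ht : buy t <;> simp [step, settle, rebuy, base, ht]
  · by_cases hsell : ρ ≤ φ r t
    · rw [base_step_bet_of_le hsell]
      simp only [base]
      nlinarith [hst.1]
    · rw [step_bet_of_lt (not_le.mp hsell)]

theorem half_le_capital (hhalf : ∀ r t, buy r → r <+: t → 1 / 2 ≤ φ r t) (s : List X) :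
    1 / 2 ≤ capital φ buy ρ s := by
  have hvalid := valid_run (φ := φ) (buy := buy) hρ s
  rw [capital]
  linarith [hvalid.half_base_le_wealth hhalf, hvalid.one_le_base]

end Valid

theorem capital_concat (hself : ∀ r, buy r → φ r r = 1) (s : List X) (x : X) :
    capital φ buy ρ (s ++ [x]) = wealth φ (s ++ [x]) (run φ buy ρ s) := by
  rw [capital, run_concat, wealth_step hself]

theorem isSupermart_capital [Nonempty X] {Q : List X → (X → ℝ) → ℝ} (hQ : Coherent Q)
    (hρ : 1 ≤ ρ) (hself : ∀ r, buy r → φ r r = 1) (hφ : ∀ r, buy r → IsSupermart Q (φ r)) :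
    IsSupermart Q (capital φ buy ρ) := by
  refine hQ.isSupermart_iff.mpr fun s => ?_
  simp only [capital_concat hself]
  have hvalid := valid_run (φ := φ) (buy := buy) hρ s
  rw [capital]
  rcases hrun : run φ buy ρ s with w | ⟨r, w⟩
  · exact (hQ.const s w).le
  · obtain ⟨hw, hr, -⟩ : Valid buy s (bet r w) := hrun ▸ hvalid
    calc Q s (fun x => w * φ r (s ++ [x])) = w * Q s (fun x => φ r (s ++ [x])) :=
          hQ.smul s (by linarith) fun x => φ r (s ++ [x])
      _ ≤ w * φ r s := by gcongr; exact (hφ r hr).step_le hQ s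

theorem run_eq_cash_one {s : List X} (hs : ∀ t, t <+: s → ¬ buy t) :
    run φ buy ρ s = cash 1 := by
  induction s using List.reverseRecOn with
  | nil => simp [run_nil, step, settle, rebuy, hs [] List.prefix_rfl]
  | append_singleton s x ih =>
    rw [run_concat, ih fun t ht => hs t (ht.trans (List.prefix_append s [x]))]
    simp [step, settle, rebuy, hs _ List.prefix_rfl]

theorem capital_eq_one (hself : ∀ r, buy r → φ r r = 1) {s : List X}
    (hs : ∀ t, t <+: s → t ≠ s → ¬ buy t) : capital φ buy ρ s = 1 := by
  rcases List.eq_nil_or_concat' s with rfl | ⟨s, x, rfl⟩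
  · rw [capital, run_nil, wealth_step hself]; rfl
  · rw [capital_concat hself, run_eq_cash_one fun t ht => hs t (ht.trans (List.prefix_append s [x]))
      fun h => by simpa [h] using ht.length_le]
    rfl

section Divergence

variable {ω : ℕ → X}

theorem run_pref_succ (k : ℕ) :
    run φ buy ρ (pref ω (k + 1)) = step φ buy ρ (pref ω (k + 1)) (run φ buy ρ (pref ω k)) := by
  rw [pref_succ, run_concat]

theorem monotone_base_run (hρ : 1 ≤ ρ) : Monotone fun k => base (run φ buy ρ (pref ω k)) :=
  monotone_nat_of_le_succ fun k => by
    rw [run_pref_succ]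
    exact base_le_base_step hρ (valid_run hρ _)

theorem exists_ge_run_eq_bet (hbuy : ∃ᶠ k in atTop, buy (pref ω k)) (K : ℕ) :
    ∃ k ≥ K, ∃ r w, run φ buy ρ (pref ω k) = bet r w := by
  obtain ⟨k, hk, hb⟩ := frequently_atTop.mp hbuy K
  obtain ⟨st, hst⟩ := exists_run_eq_step (φ := φ) (ρ := ρ) (pref ω k)
  exact ⟨k, hk, hst ▸ exists_step_eq_bet hb st⟩

theorem exists_mul_le_base_run (hρ : 1 ≤ ρ)
    (hsell : ∀ r, buy r → pref ω r.length = r → ∀ᶠ k in atTop, ρ ≤ φ r (pref ω k))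
    {k : ℕ} {r : List X} {w : ℝ} (hk : run φ buy ρ (pref ω k) = bet r w) :
    ∃ k', ρ * w ≤ base (run φ buy ρ (pref ω k')) := by
  obtain ⟨hw, hr, hrk⟩ : Valid buy (pref ω k) (bet r w) := hk ▸ valid_run hρ _
  obtain ⟨N, hN⟩ := eventually_atTop.mp (hsell r hr (hrk.pref_eq (by simp)))
  have hcashed : ∀ i, ρ ≤ φ r (pref ω (i + 1)) → run φ buy ρ (pref ω i) = bet r w →
      ρ * w ≤ base (run φ buy ρ (pref ω (i + 1))) := fun i hle hi => by
    rw [run_pref_succ, hi, base_step_bet_of_le hle]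
    nlinarith
  have hhold : ∀ i ≥ k, run φ buy ρ (pref ω i) = bet r w ∨
      ρ * w ≤ base (run φ buy ρ (pref ω i)) := by
    intro i hi
    induction i, hi using Nat.le_induction with
    | base => exact Or.inl hk
    | succ i _ ih =>
      rcases ih with hi | hi
      · by_cases hle : ρ ≤ φ r (pref ω (i + 1))
        · exact Or.inr (hcashed i hle hi)
        · rw [run_pref_succ, hi, step_bet_of_lt (not_le.mp hle)]
          exact Or.inl rfl
      · exact Or.inr (hi.trans (monotone_base_run hρ (Nat.le_succ i)))
  rcases hhold (max k N) (le_max_left k N) with hi | hi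
  · exact ⟨_, hcashed _ (hN _ (by omega)) hi⟩
  · exact ⟨_, hi⟩

theorem tendsto_capital (hρ : 1 < ρ) (hhalf : ∀ r t, buy r → r <+: t → 1 / 2 ≤ φ r t)
    (hbuy : ∃ᶠ k in atTop, buy (pref ω k))
    (hsell : ∀ r, buy r → pref ω r.length = r → ∀ᶠ k in atTop, ρ ≤ φ r (pref ω k)) :
    Tendsto (fun k => capital φ buy ρ (pref ω k)) atTop atTop := by
  have hpow : ∀ n : ℕ, ∃ k, ρ ^ n ≤ base (run φ buy ρ (pref ω k)) := by
    intro n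
    induction n with
    | zero => exact ⟨0, by simpa using (valid_run hρ.le _).one_le_base⟩
    | succ n ih =>
      obtain ⟨k, hk⟩ := ih
      obtain ⟨k₁, hk₁, r, w, hbet⟩ := exists_ge_run_eq_bet hbuy k
      obtain ⟨k', hk'⟩ := exists_mul_le_base_run hρ.le hsell hbet
      have hw : base (run φ buy ρ (pref ω k)) ≤ w := by
        simpa [hbet, base] using monotone_base_run (φ := φ) (buy := buy) (ω := ω) hρ.le hk₁
      refine ⟨k', ?_⟩
      calc ρ ^ (n + 1) = ρ * ρ ^ n := pow_succ' ρ n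
        _ ≤ ρ * w := by gcongr; linarith
        _ ≤ _ := hk'
  have hbase : Tendsto (fun k => base (run φ buy ρ (pref ω k))) atTop atTop :=
    tendsto_atTop_atTop_of_monotone (monotone_base_run hρ.le) fun R => by
      obtain ⟨n, hn⟩ := pow_unbounded_of_one_lt R hρ
      obtain ⟨k, hk⟩ := hpow n
      exact ⟨k, hn.le.trans hk⟩
  exact tendsto_atTop_mono (fun k => (valid_run hρ.le _).half_base_le_wealth hhalf)
    (hbase.atTop_div_const two_pos)

end Divergence

end BetState

section LevyTest

variable {X : Type*} {Q : List X → (X → ℝ) → ℝ}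

open Classical in
noncomputable def superhedgeBelow (Q : List X → (X → ℝ) → ℝ) (f : (ℕ → X) → EReal) (a : ℝ)
    (r : List X) : List X → ℝ :=
  if h : ∃ M, Superhedges Q f r M ∧ M r < a then h.choose else 0

theorem superhedgeBelow_spec {f : (ℕ → X) → EReal} {a : ℝ} {r : List X} (h : EV Q f r < a) :
    Superhedges Q f r (superhedgeBelow Q f a r) ∧ superhedgeBelow Q f a r r < a := by
  have hex : ∃ M, Superhedges Q f r M ∧ M r < a := by
    obtain ⟨M, hM, hlt⟩ := exists_superhedges_lt h
    exact ⟨M, hM, EReal.coe_lt_coe_iff.mp hlt⟩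
  rw [superhedgeBelow, dif_pos hex]
  exact hex.choose_spec

/-- A superhedge of `g` from `r` starting below `a`, rescaled to start at `1`; as the superhedge
stays above `-C` beyond `r` (`g ≥ -C`), the rescaled process stays above `1 / 2`. -/
noncomputable def levyUnit (Q : List X → (X → ℝ) → ℝ) (g : (ℕ → X) → ℝ) (C a : ℝ)
    (r t : List X) : ℝ :=
  1 + (superhedgeBelow Q (fun ω => g ω) a r t - superhedgeBelow Q (fun ω => g ω) a r r) /
    (2 * (a + C))

/-- `levyUnit` is at least this once its superhedge exceeds `b`. -/
noncomputable def levyRatio (C a b : ℝ) : ℝ := 1 + (b - a) / (2 * (a + C))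

def levyBuy (Q : List X → (X → ℝ) → ℝ) (g : (ℕ → X) → ℝ) (a : ℝ) (u t : List X) : Prop :=
  u <+: t ∧ EV Q (fun ω => g ω) t < a

/-- Bets on `g` exceeding `b` at every node beyond `u` where its upper expectation is below `a`. -/
noncomputable def levyTest (Q : List X → (X → ℝ) → ℝ) (g : (ℕ → X) → ℝ) (C a b : ℝ)
    (u : List X) : List X → ℝ :=
  BetState.capital (levyUnit Q g C a) (levyBuy Q g a u) (levyRatio C a b)

variable {g : (ℕ → X) → ℝ} {C a b : ℝ}

theorem levyUnit_self (r : List X) : levyUnit Q g C a r r = 1 := by simp [levyUnit]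

theorem levyTest_self (u : List X) : levyTest Q g C a b u u = 1 :=
  BetState.capital_eq_one (fun r _ => levyUnit_self r) fun _ ht hne hbuy =>
    hne (ht.eq_of_length (ht.length_le.antisymm hbuy.1.length_le))

theorem one_lt_levyRatio (haC : -C < a) (hab : a < b) : 1 < levyRatio C a b :=
  lt_add_of_pos_right 1 (div_pos (by linarith) (by linarith))

theorem eventually_levyRatio_le_levyUnit (haC : -C < a) {r : List X}
    (hr : EV Q (fun ω => g ω) r < a) {ω : ℕ → X} (hωr : pref ω r.length = r) (hb : b < g ω) :
    ∀ᶠ k in atTop, levyRatio C a b ≤ levyUnit Q g C a r (pref ω k) := by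
  obtain ⟨hM, hMr⟩ := superhedgeBelow_spec hr
  have hlim : (b : EReal) < liminf (fun n => (superhedgeBelow Q _ a r (pref ω n) : EReal)) atTop :=
    (EReal.coe_lt_coe hb).trans_le (hM.2.2 ω hωr)
  filter_upwards [eventually_lt_of_lt_liminf hlim] with k hk
  have hpos : 0 < 2 * (a + C) := by linarith
  rw [levyRatio, levyUnit, add_le_add_iff_left]
  exact div_le_div_of_nonneg_right (by linarith [EReal.coe_lt_coe_iff.mp hk]) hpos.le

variable (hQ : Coherent Q) (haC : -C < a)
include hQ haC

theorem isSupermart_levyUnit {r : List X} (hr : EV Q (fun ω => g ω) r < a) :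
    IsSupermart Q (levyUnit Q g C a r) := by
  have hM := (superhedgeBelow_spec hr).1.1
  convert hM.const_mul_add hQ (IsSupermart.const hQ
    (1 - superhedgeBelow Q (fun ω => g ω) a r r / (2 * (a + C))))
    (inv_pos.mpr (by linarith : 0 < 2 * (a + C))).le using 1
  funext t
  simp only [levyUnit]
  ring

theorem isSupermart_levyTest [Nonempty X] (hab : a < b) (u : List X) :
    IsSupermart Q (levyTest Q g C a b u) :=
  BetState.isSupermart_capital hQ (one_lt_levyRatio haC hab).le
    (fun r _ => levyUnit_self r) fun _ hr => isSupermart_levyUnit hQ haC hr.2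

variable [Finite X] [Nonempty X]

theorem half_le_levyUnit (hg : ∀ ω, -C ≤ g ω) {r t : List X}
    (hr : EV Q (fun ω => g ω) r < a) (hrt : r <+: t) : 1 / 2 ≤ levyUnit Q g C a r t := by
  obtain ⟨hM, hMr⟩ := superhedgeBelow_spec hr
  have hMt := hM.le_of_forall_le hQ (c := -C) (fun ω _ => EReal.coe_le_coe (hg ω)) hrt
  have hpos : 0 < 2 * (a + C) := by linarith
  rw [levyUnit, ← sub_le_iff_le_add', le_div_iff₀ hpos]
  linarith

theorem half_le_levyTest (hab : a < b) (hg : ∀ ω, -C ≤ g ω) (u s : List X) :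
    1 / 2 ≤ levyTest Q g C a b u s :=
  BetState.half_le_capital (one_lt_levyRatio haC hab).le
    (fun _ _ hr hrt => half_le_levyUnit hQ haC hg hr.2 hrt) s

theorem tendsto_levyTest (hab : a < b) (hg : ∀ ω, -C ≤ g ω) {u : List X} {ω : ℕ → X}
    (hωu : pref ω u.length = u) (hfreq : ∃ᶠ k in atTop, EV Q (fun ω => g ω) (pref ω k) < a)
    (hb : b < g ω) : Tendsto (fun k => levyTest Q g C a b u (pref ω k)) atTop atTop :=
  BetState.tendsto_capital (one_lt_levyRatio haC hab)
    (fun _ _ hr hrt => half_le_levyUnit hQ haC hg hr.2 hrt)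
    (hfreq.mp ((eventually_ge_atTop u.length).mono fun _ hk hlt =>
      ⟨prefix_pref_of_pref_eq hωu hk, hlt⟩))
    fun _ hr hωr => eventually_levyRatio_le_levyUnit haC hr.2 hωr hb

end LevyTest

section Mixture

variable {X : Type*} {Q : List X → (X → ℝ) → ℝ}

/-- Runs `T u` from the node `u` of depth `j` on the current path. -/
def restartAt (j : ℕ) (T : List X → List X → ℝ) (t : List X) : ℝ := T (t.take j) t

theorem restartAt_of_length_le {T : List X → List X → ℝ} (hself : ∀ u, T u u = 1) {j : ℕ}
    {t : List X} (ht : t.length ≤ j) : restartAt j T t = 1 := by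
  rw [restartAt, List.take_of_length_le ht, hself]

theorem isSupermart_restartAt [Nonempty X] (hQ : Coherent Q) {T : List X → List X → ℝ}
    (hT : ∀ u, IsSupermart Q (T u)) (hself : ∀ u, T u u = 1) (j : ℕ) :
    IsSupermart Q (restartAt j T) := by
  refine hQ.isSupermart_iff.mpr fun s => ?_
  rcases lt_or_ge s.length j with hs | hs
  · simp only [restartAt_of_length_le hself (show (s ++ [_]).length ≤ j by simp; omega),
      restartAt_of_length_le hself hs.le, hQ.const, le_refl]
  · simp only [restartAt, List.take_append_of_le_length hs]
    exact (hT _).step_le hQ s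

theorem sum_half_pow_succ_le_one (n : ℕ) : ∑ j ∈ Finset.range n, (1 / 2 : ℝ) ^ (j + 1) ≤ 1 := by
  simp only [pow_succ, ← Finset.sum_mul]
  linarith [sum_geometric_two_le n]

/-- The mixture `∑ⱼ 2⁻ʲ⁻¹ G j` of processes `G j` that equal `1` up to depth `j`, which makes
the sum finite at each node. -/
noncomputable def mixture (G : ℕ → List X → ℝ) (t : List X) : ℝ :=
  1 + ∑ j ∈ Finset.range t.length, (1 / 2 : ℝ) ^ (j + 1) * (G j t - 1)

variable {G : ℕ → List X → ℝ} (hG₀ : ∀ j t, 0 ≤ G j t)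
include hG₀

theorem le_mixture {j : ℕ} {t : List X} (hj : j < t.length) :
    (1 / 2 : ℝ) ^ (j + 1) * G j t ≤ mixture G t := by
  have hsplit : mixture G t = (1 - ∑ i ∈ Finset.range t.length, (1 / 2 : ℝ) ^ (i + 1)) +
      ∑ i ∈ Finset.range t.length, (1 / 2 : ℝ) ^ (i + 1) * G i t := by
    simp only [mixture, mul_sub, mul_one, Finset.sum_sub_distrib]
    ring
  rw [hsplit]
  linarith [sum_half_pow_succ_le_one t.length, Finset.single_le_sum
    (f := fun i => (1 / 2 : ℝ) ^ (i + 1) * G i t) (fun i _ => by positivity [hG₀ i t])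
    (Finset.mem_range.mpr hj)]

theorem isTestSupermart_mixture [Nonempty X] (hQ : Coherent Q) (hG : ∀ j, IsSupermart Q (G j))
    (hG₁ : ∀ j t, t.length ≤ j → G j t = 1) : IsTestSupermart Q (mixture G) := by
  refine ⟨fun s => ?_, fun t => ?_, by simp [mixture]⟩
  · have hdiff : pdiff (mixture G) s =
        ∑ j ∈ Finset.range (s.length + 1), (1 / 2 : ℝ) ^ (j + 1) • pdiff (G j) s := by
      funext x
      simp only [pdiff, mixture, Finset.sum_apply, Pi.smul_apply, smul_eq_mul,
        List.length_append, List.length_singleton, Finset.sum_range_succ _ s.length,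
        hG₁ s.length s le_rfl]
      simp only [mul_sub, Finset.sum_sub_distrib]
      ring
    rw [hdiff]
    refine (hQ.sum_le s _ _).trans (Finset.sum_nonpos fun j _ => ?_)
    rw [hQ.smul s (by positivity)]
    exact mul_nonpos_of_nonneg_of_nonpos (by positivity) (hG j s)
  · rcases Nat.eq_zero_or_pos t.length with h | h
    · simp [mixture, h]
    · exact (mul_nonneg (by positivity) (hG₀ 0 t)).trans (le_mixture hG₀ h)

theorem tendsto_mixture {ω : ℕ → X} {j : ℕ} (hj : Tendsto (fun k => G j (pref ω k)) atTop atTop) :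
    Tendsto (fun k => mixture G (pref ω k)) atTop atTop :=
  tendsto_atTop_mono' atTop
    ((eventually_gt_atTop j).mono fun k hk => le_mixture hG₀ (by simpa using hk))
    (hj.const_mul_atTop (by positivity))

end Mixture

section LevyZeroOne

variable {X : Type*} {Q : List X → (X → ℝ) → ℝ}

noncomputable def levyTestOf (Q : List X → (X → ℝ) → ℝ) (F : ℕ → (ℕ → X) → ℝ) (C : ℕ → ℝ)
    (p : ℕ × ℚ × ℚ) (u : List X) : List X → ℝ :=
  open Classical in
  if -C p.1 < p.2.1 ∧ (p.2.1 : ℝ) < p.2.2 then levyTest Q (F p.1) (C p.1) p.2.1 p.2.2 u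
  else fun _ => 1

variable {F : ℕ → (ℕ → X) → ℝ} {C : ℕ → ℝ} (p : ℕ × ℚ × ℚ)

theorem levyTestOf_self (u : List X) : levyTestOf Q F C p u u = 1 := by
  unfold levyTestOf
  split_ifs
  exacts [levyTest_self u, rfl]

variable [Nonempty X] (hQ : Coherent Q)
include hQ

theorem isSupermart_levyTestOf (u : List X) : IsSupermart Q (levyTestOf Q F C p u) := by
  unfold levyTestOf
  split_ifs with h
  exacts [isSupermart_levyTest hQ h.1 h.2 u, IsSupermart.const hQ 1]

variable [Finite X] (hF : ∀ n ω, -C n ≤ F n ω)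
include hF

theorem levyTestOf_nonneg (u t : List X) : 0 ≤ levyTestOf Q F C p u t := by
  unfold levyTestOf
  split_ifs with h
  · linarith [half_le_levyTest hQ h.1 h.2 (hF p.1) u t]
  · exact zero_le_one

/-- The lower half of the game-theoretic Lévy zero-one law, for countably many gambles at
once. -/
theorem exists_isTestSupermart_tendsto_of_liminf_lt :
    ∃ T, IsTestSupermart Q T ∧ ∀ ω n,
      liminf (fun k => EV Q (fun ω => F n ω) (pref ω k)) atTop < F n ω →
        Tendsto (fun k => T (pref ω k)) atTop atTop := by
  set G : ℕ → List X → ℝ := fun j => restartAt j (levyTestOf Q F C (Denumerable.ofNat _ j))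
  have hG₀ : ∀ j t, 0 ≤ G j t := fun j t => levyTestOf_nonneg _ hQ hF _ t
  refine ⟨mixture G, isTestSupermart_mixture hG₀ hQ
    (fun j => isSupermart_restartAt hQ (isSupermart_levyTestOf _ hQ) (levyTestOf_self _) j)
    (fun j _ => restartAt_of_length_le (levyTestOf_self _)), fun ω n hlt => ?_⟩
  have hC : ((-C n : ℝ) : EReal) ≤ liminf (fun k => EV Q (fun ω => F n ω) (pref ω k)) atTop :=
    le_liminf_of_le (by isBoundedDefault) <| Eventually.of_forall fun k =>
      le_EV_of_forall_le hQ fun ω _ => EReal.coe_le_coe (hF n ω)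
  obtain ⟨x, hx, hxF⟩ := EReal.exists_between_coe_real hlt
  obtain ⟨a, hxa, haF⟩ := exists_rat_btwn (EReal.coe_lt_coe_iff.mp hxF)
  obtain ⟨b, hab, hbF⟩ := exists_rat_btwn haF
  have haC : -C n < a := EReal.coe_lt_coe_iff.mp (hC.trans_lt (hx.trans (EReal.coe_lt_coe hxa)))
  have hfreq : ∃ᶠ k in atTop, EV Q (fun ω => F n ω) (pref ω k) < (a : ℝ) :=
    frequently_lt_of_liminf_lt (by isBoundedDefault) (hx.trans (EReal.coe_lt_coe hxa))
  obtain ⟨j, hj⟩ : ∃ j, Denumerable.ofNat (ℕ × ℚ × ℚ) j = (n, a, b) :=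
    ⟨_, Denumerable.ofNat_encode _⟩
  have hGj : ∀ k ≥ j, G j (pref ω k) = levyTest Q (F n) (C n) a b (pref ω j) (pref ω k) := by
    intro k hk
    show levyTestOf Q F C (Denumerable.ofNat _ j) ((pref ω k).take j) (pref ω k) = _
    rw [hj, take_pref ω hk, levyTestOf, if_pos ⟨haC, hab⟩]
  refine tendsto_mixture hG₀ (j := j) ((tendsto_levyTest hQ haC hab (hF n) (u := pref ω j)
    (by rw [length_pref]) hfreq hbF).congr' ?_)
  filter_upwards [eventually_ge_atTop j] with k hk
  exact (hGj k hk).symm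

end LevyZeroOne

section Continuity

variable {X : Type*} {Q : List X → (X → ℝ) → ℝ}

/-- The limit of the conditional upper expectations of the `F n`, capped by `M` to keep it
finite. -/
noncomputable def cappedLimit (Q : List X → (X → ℝ) → ℝ) (F : ℕ → (ℕ → X) → ℝ)
    (M : List X → ℝ) (s : List X) : ℝ :=
  ⨆ n, min (EVReal Q (F n) s) (M s)

variable {F : ℕ → (ℕ → X) → ℝ} {M : List X → ℝ}

theorem bddAbove_range_min_EVReal (s : List X) :
    BddAbove (Set.range fun n => min (EVReal Q (F n) s) (M s)) :=
  ⟨M s, by rintro _ ⟨n, rfl⟩; exact min_le_right _ _⟩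

theorem min_EVReal_le_cappedLimit (n : ℕ) (s : List X) :
    min (EVReal Q (F n) s) (M s) ≤ cappedLimit Q F M s :=
  le_ciSup (bddAbove_range_min_EVReal s) n

variable [Finite X] [Nonempty X] (hQ : Coherent Q) {C : ℕ → ℝ} (hC : ∀ n ω, |F n ω| ≤ C n)
include hQ hC

theorem isSupermart_cappedLimit (hF : Monotone F) (hM : IsSupermart Q M) :
    IsSupermart Q (cappedLimit Q F M) :=
  hQ.isSupermart_iSup (fun n => ((isSupermart_EVReal hQ (hC n)).min hQ hM))
    (fun s _ _ hnm => min_le_min_right _ (EVReal_mono hQ (hC _) (hC _) (hF hnm) s))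
    bddAbove_range_min_EVReal

theorem coe_le_liminf_cappedLimit {f : (ℕ → X) → EReal} {ω : ℕ → X}
    (hM : f ω ≤ liminf (fun k => (M (pref ω k) : EReal)) atTop) {m : ℕ} (hFf : F m ω ≤ f ω)
    (hLevy : F m ω ≤ liminf (fun k => EV Q (fun ω => F m ω) (pref ω k)) atTop) :
    (F m ω : EReal) ≤ liminf (fun k => (cappedLimit Q F M (pref ω k) : EReal)) atTop := by
  simp only [EV_coe_eq_EVReal hQ (hC m)] at hLevy
  calc (F m ω : EReal)
      ≤ min (liminf (fun k => (EVReal Q (F m) (pref ω k) : EReal)) atTop)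
          (liminf (fun k => (M (pref ω k) : EReal)) atTop) := le_min hLevy (hFf.trans hM)
    _ = liminf (fun k => ((min (EVReal Q (F m) (pref ω k)) (M (pref ω k)) : ℝ) : EReal)) atTop := by
        simp only [EReal.coe_strictMono.monotone.map_min]
        exact (liminf_min ..).symm
    _ ≤ _ := liminf_le_liminf (Eventually.of_forall fun k =>
        EReal.coe_le_coe (min_EVReal_le_cappedLimit m _))

theorem superhedges_add_cappedLimit (hF : Monotone F) {f : (ℕ → X) → EReal}
    (hlim : ∀ ω, Tendsto (fun n => (F n ω : EReal)) atTop (𝓝 (f ω))) (hM : Superhedges Q f [] M)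
    {T : List X → ℝ} (hT : IsTestSupermart Q T)
    (hTlim : ∀ ω m, liminf (fun k => EV Q (fun ω => F m ω) (pref ω k)) atTop < F m ω →
      Tendsto (fun k => T (pref ω k)) atTop atTop) {ε : ℝ} (hε : 0 < ε) :
    Superhedges Q f [] fun s => ε * T s + cappedLimit Q F M s := by
  obtain ⟨cM, hcM⟩ := hM.2.1
  have hlow : ∀ s, min (-C 0) cM ≤ cappedLimit Q F M s := fun s =>
    (min_le_min (neg_le_EVReal hQ (hC 0) s) (hcM s)).trans (min_EVReal_le_cappedLimit 0 s)
  have hMT : ∀ s, cappedLimit Q F M s ≤ ε * T s + cappedLimit Q F M s := fun s => by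
    nlinarith [hT.2.1 s]
  refine ⟨hT.1.const_mul_add hQ (isSupermart_cappedLimit hQ hC hF hM.1) hε.le,
    ⟨_, fun s => (hlow s).trans (hMT s)⟩, fun ω _ => ?_⟩
  by_cases hLevy : ∀ m, F m ω ≤ liminf (fun k => EV Q (fun ω => F m ω) (pref ω k)) atTop
  · refine le_of_tendsto' (hlim ω) fun m => ?_
    have hFf : (F m ω : EReal) ≤ f ω :=
      Monotone.ge_of_tendsto (fun _ _ h => EReal.coe_le_coe (hF h ω)) (hlim ω) m
    exact (coe_le_liminf_cappedLimit hQ hC (hM.2.2 ω rfl) hFf (hLevy m)).trans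
      (liminf_le_liminf (Eventually.of_forall fun k => EReal.coe_le_coe (hMT _)))
  · simp only [not_forall, not_le] at hLevy
    obtain ⟨m, hm⟩ := hLevy
    have htop : Tendsto (fun k => ε * T (pref ω k) + cappedLimit Q F M (pref ω k)) atTop atTop :=
      tendsto_atTop_add_right_of_le _ _ ((hTlim ω m hm).const_mul_atTop hε) fun k => hlow _
    rw [(EReal.tendsto_coe_nhds_top_iff.mpr htop).liminf_eq]
    exact le_top

theorem EV_le_of_forall_EV_le (hF : Monotone F) {f : (ℕ → X) → EReal}
    (hlim : ∀ ω, Tendsto (fun n => (F n ω : EReal)) atTop (𝓝 (f ω))) (hfin : EV Q f [] < ⊤)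
    {c : ℝ} (hc : ∀ n, EV Q (fun ω => F n ω) [] ≤ c) : EV Q f [] ≤ c := by
  refine EReal.le_of_forall_lt_iff_le.mp fun z hz => ?_
  obtain ⟨M, hM, -⟩ := exists_superhedges_lt hfin
  obtain ⟨T, hT, hTlim⟩ := exists_isTestSupermart_tendsto_of_liminf_lt hQ (C := C)
    (F := F) fun n ω => neg_le_of_abs_le (hC n ω)
  have hroot : cappedLimit Q F M [] ≤ c := ciSup_le fun n => (min_le_left _ _).trans <| by
    have := hc n
    rwa [EV_coe_eq_EVReal hQ (hC n), EReal.coe_le_coe_iff] at this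
  have hε : 0 < z - c := sub_pos.mpr (EReal.coe_lt_coe_iff.mp hz)
  calc EV Q f [] ≤ ((z - c) * T [] + cappedLimit Q F M [] : ℝ) :=
        EV_le_of_superhedges (superhedges_add_cappedLimit hQ hC hF hlim hM hT hTlim hε)
    _ ≤ z := by rw [hT.2.2]; exact EReal.coe_le_coe (by linarith)

end Continuity

theorem upward_convergence_gambles {X : Type*} [Fintype X] [Nonempty X]
    (Q : List X → (X → ℝ) → ℝ) (hQ : Coherent Q)
    (f : (ℕ → X) → EReal) (F : ℕ → (ℕ → X) → ℝ)
    (hFb : ∀ n, ∃ C : ℝ, ∀ ω, |F n ω| ≤ C)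
    (hmono : ∀ n, F n ≤ F (n + 1))
    (hlim : ∀ ω, Filter.Tendsto (fun n => ((F n ω : ℝ) : EReal)) Filter.atTop (nhds (f ω)))
    (hfin : EV Q f [] < ⊤) :
    Filter.Tendsto (fun n => EV Q (fun ω => ((F n ω : ℝ) : EReal)) [])
      Filter.atTop (nhds (EV Q f [])) := by
  choose C hC using hFb
  have hF : Monotone F := monotone_nat_of_le_succ hmono
  have hEV_mono : Monotone fun n => EV Q (fun ω => (F n ω : EReal)) [] :=
    fun n m h => EV_mono (fun ω => EReal.coe_le_coe (hF h ω)) []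
  have hEV_le : ∀ n, EV Q (fun ω => (F n ω : EReal)) [] ≤ EV Q f [] := fun n =>
    EV_mono (fun ω => Monotone.ge_of_tendsto (fun _ _ h => EReal.coe_le_coe (hF h ω)) (hlim ω) n) []
  have hEV_eq : EV Q f [] = ⨆ n, EV Q (fun ω => (F n ω : EReal)) [] :=
    le_antisymm (EReal.le_of_forall_lt_iff_le.mp fun z hz =>
        EV_le_of_forall_EV_le hQ hC hF hlim hfin fun n => (le_iSup _ n).trans hz.le)
      (iSup_le hEV_le)
  rw [hEV_eq]
  exact tendsto_atTop_iSup hEV_mono
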